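/- Let H be a real inner product space, let f : H → H, and suppose μ > 0 and λ > 0 are such that ⟨ŵ − w⋆, f(ŵ)⟩ ≥ μ·‖ŵ − w⋆‖² for a given point ŵ ∈ H. Then the update w_{t+1} = w_t − λ·f(ŵ) satisfies ‖w_{t+1} − w⋆‖² ≤ (1 − λμ)·‖w_t − w⋆‖² + λ²·‖f(ŵ)‖² + 2λμ·‖ŵ − w_t‖² + 2λ·⟨ŵ − w_t, f(ŵ)⟩. -/

import Mathlib

open scoped RealInnerProductSpace

/-!
Expanding the square of the update gives the exact SGD identity
`‖w⁺ - w⋆‖² = ‖w - w⋆‖² - 2λ⟪w - w⋆, g⟫ + λ²‖g‖²`. Strong convexity only controls the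
inner product at the perturbed point `ŵ`, so `⟪w - w⋆, g⟫` is split as
`⟪ŵ - w⋆, g⟫ - ⟪ŵ - w, g⟫`, and `‖ŵ - w⋆‖²` is bounded below through
`‖w - w⋆‖² ≤ 2‖ŵ - w‖² + 2‖ŵ - w⋆‖²`; this halves the contraction factor and produces the
two noise terms.
-/

theorem norm_sub_sq_le_two_mul_add {E : Type*} [SeminormedAddCommGroup E] (x y z : E) :
    ‖x - z‖ ^ 2 ≤ 2 * (‖y - x‖ ^ 2 + ‖y - z‖ ^ 2) := by
  have htri : ‖x - z‖ ≤ ‖y - x‖ + ‖y - z‖ := by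
    simpa only [norm_sub_rev x y] using norm_sub_le_norm_sub_add_norm_sub x y z
  exact (pow_le_pow_left₀ (norm_nonneg _) htri 2).trans add_sq_le

section

variable {F : Type*} [SeminormedAddCommGroup F] [InnerProductSpace ℝ F]

theorem norm_sub_smul_sq_real (x g : F) (a : ℝ) :
    ‖x - a • g‖ ^ 2 = ‖x‖ ^ 2 - 2 * a * ⟪x, g⟫ + a ^ 2 * ‖g‖ ^ 2 := by
  rw [norm_sub_sq_real, real_inner_smul_right, norm_smul, mul_pow, Real.norm_eq_abs, sq_abs]
  ring

theorem mul_norm_sq_le_inner_of_perturbed {μ : ℝ} (hμ : 0 ≤ μ) {w ŵ w₀ g : F}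
    (h : μ * ‖ŵ - w₀‖ ^ 2 ≤ ⟪ŵ - w₀, g⟫) :
    μ * ‖w - w₀‖ ^ 2 ≤ 2 * ⟪w - w₀, g⟫ + 2 * μ * ‖ŵ - w‖ ^ 2 + 2 * ⟪ŵ - w, g⟫ := by
  have hsplit : ⟪w - w₀, g⟫ = ⟪ŵ - w₀, g⟫ - ⟪ŵ - w, g⟫ := by
    rw [← inner_sub_left, sub_sub_sub_cancel_left]
  have hdist := mul_le_mul_of_nonneg_left (norm_sub_sq_le_two_mul_add w ŵ w₀) hμ
  linarith

end

/-- One-step recursion of the perturbed iterate analysis of asynchronous SGD. -/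
theorem perturbed_iterate_recursion {H : Type*} [NormedAddCommGroup H]
    [InnerProductSpace ℝ H] (f : H → H) (μ lam : ℝ) (hμ : 0 < μ) (hlam : 0 < lam)
    (wt wstar what : H)
    (hconv : μ * ‖what - wstar‖ ^ 2 ≤ ⟪what - wstar, f what⟫)
    (wnext : H) (hupd : wnext = wt - lam • f what) :
    ‖wnext - wstar‖ ^ 2 ≤ (1 - lam * μ) * ‖wt - wstar‖ ^ 2
      + lam ^ 2 * ‖f what‖ ^ 2 + 2 * lam * μ * ‖what - wt‖ ^ 2
      + 2 * lam * ⟪what - wt, f what⟫ := by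
  have hstep : wnext - wstar = (wt - wstar) - lam • f what := by
    rw [hupd, sub_right_comm]
  have hmono := mul_le_mul_of_nonneg_left
    (mul_norm_sq_le_inner_of_perturbed (w := wt) hμ.le hconv) hlam.le
  rw [hstep, norm_sub_smul_sq_real]
  linarith
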